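/- Let q be a line path in a subshift X and suppose (β, α) and (β′, α′) are both reduced initial pairs associated with (p, q), witnessed by x, x′ ∈ X respectively (p = βx = β′x′, q = αx = α′x′, with last letters of each pair distinct). If |α′| > |α| and |β′| < |β|, a contradiction arises: x′ would be periodic of the form (dc)^∞, contradicting that q is a line path. -/

import Mathlib

/-- The iterated shift: `shiftN x n = σⁿ(x)`. -/
def shiftN {A : Type*} (x : ℕ → A) (n : ℕ) : ℕ → A := fun k => x (k + n)

/-- Tail equivalence: `x ∼ y` iff `σⁿ(x) = σᵐ(y)` for some `n, m ∈ ℕ`. -/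
def tailEq {A : Type*} (x y : ℕ → A) : Prop := ∃ n m : ℕ, shiftN x n = shiftN y m

/-- Concatenation of a finite word with an infinite sequence. -/
def wcat {A : Type*} (w : List A) (x : ℕ → A) : ℕ → A :=
  fun n => if h : n < w.length then w.get ⟨n, h⟩ else x (n - w.length)

/-- The language of `X`: finite words appearing in some element of `X`. -/
def inLang {A : Type*} (X : Set (ℕ → A)) (w : List A) : Prop :=
  ∃ x ∈ X, ∃ k : ℕ, ∀ i (h : i < w.length), w.get ⟨i, h⟩ = x (k + i)

/-- The periodic infinite word `w^∞`. -/
def perInf {A : Type*} (w : List A) (h : w ≠ []) : ℕ → A :=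
  fun n => w.get ⟨n % w.length, Nat.mod_lt n (List.length_pos_iff.mpr h)⟩

/-- `q` is a line path in `X`. -/
def IsLinePath {A : Type*} (X : Set (ℕ → A)) (q : ℕ → A) : Prop :=
  q ∈ X ∧ {x | x ∈ X ∧ x 0 = q 0} = {q} ∧
    ∀ (β : List A) (hβ : β ≠ []) (k : ℕ), shiftN q k ≠ perInf β hβ


/-- `(β, α)` is a reduced initial pair associated with `(p, q)`. -/
def RedInitPair {A : Type*} (X : Set (ℕ → A)) (p q : ℕ → A) (β α : List A) : Prop :=
  inLang X β ∧ inLang X α ∧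
    ∃ x ∈ X, p = wcat β x ∧ q = wcat α x ∧
      (α = [] ∨ β = [] ∨ α.getLast? ≠ β.getLast?)

/-! From `q = αx = α'x'`, `x'` is the tail of `x` after `|α'| - |α|` letters; from `p = βx = β'x'`,
`x` is the tail of `x'` after `|β| - |β'|` letters. So `x'`, itself a tail of `q`, has the positive
period `(|α'| - |α|) + (|β| - |β'|)`, i.e. it is some `w^∞`, which a line path forbids. -/

theorem shiftN_shiftN {A : Type*} (x : ℕ → A) (m n : ℕ) :
    shiftN (shiftN x m) n = shiftN x (n + m) := by
  funext k
  simp only [shiftN, Nat.add_assoc]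

theorem shiftN_wcat_length {A : Type*} (w : List A) (x : ℕ → A) :
    shiftN (wcat w x) w.length = x := by
  funext n
  simp [shiftN, wcat]

theorem shiftN_eq_of_wcat_eq {A : Type*} {u v : List A} {x y : ℕ → A}
    (h : wcat u x = wcat v y) (huv : u.length ≤ v.length) :
    shiftN x (v.length - u.length) = y := by
  calc shiftN x (v.length - u.length)
      = shiftN (wcat u x) v.length := by
        rw [← shiftN_wcat_length u x, shiftN_shiftN, Nat.sub_add_cancel huv, shiftN_wcat_length]
    _ = y := by rw [h, shiftN_wcat_length]

theorem Function.Periodic.eq_perInf {A : Type*} {y : ℕ → A} {n : ℕ} (hy : Function.Periodic y n)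
    (hn : 0 < n) :
    y = perInf (List.ofFn fun i : Fin n => y i) (List.ofFn_eq_nil_iff.not.mpr hn.ne') := by
  funext k
  simp [perInf, hy.map_mod_nat]

theorem IsLinePath.shiftN_shiftN_ne_self {A : Type*} {X : Set (ℕ → A)} {q : ℕ → A}
    (hq : IsLinePath X q) (k : ℕ) {n : ℕ} (hn : 0 < n) :
    shiftN (shiftN q k) n ≠ shiftN q k := fun hper =>
  hq.2.2 _ _ k <| Function.Periodic.eq_perInf (fun i => congrFun hper i) hn

theorem redInitPair_length_case_impossible_general {A : Type*} (X : Set (ℕ → A))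
    (q : ℕ → A) (hq : IsLinePath X q) (p : ℕ → A)
    (β α β' α' : List A) (x x' : ℕ → A)
    (hp1 : p = wcat β x) (hp2 : p = wcat β' x')
    (hq1 : q = wcat α x) (hq2 : q = wcat α' x')
    (hlenα : α.length < α'.length) (hlenβ : β'.length < β.length) :
    False := by
  have hx'x : shiftN x (α'.length - α.length) = x' :=
    shiftN_eq_of_wcat_eq (hq1.symm.trans hq2) hlenα.le
  have hxx' : shiftN x' (β.length - β'.length) = x :=
    shiftN_eq_of_wcat_eq (hp2.symm.trans hp1) hlenβ.le
  have hx'_tail : shiftN q α'.length = x' := by rw [hq2, shiftN_wcat_length]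
  refine hq.shiftN_shiftN_ne_self α'.length
    (n := (α'.length - α.length) + (β.length - β'.length)) (by omega) ?_
  rw [hx'_tail, ← shiftN_shiftN, hxx', hx'x]

/-- two reduced initial pairs for `(p, q)` with `|α′| > |α|` and
`|β′| < |β|` yield a contradiction when `q` is a line path. -/
theorem redInitPair_length_case_impossible {A : Type*} (X : Set (ℕ → A))
    (q : ℕ → A) (hq : IsLinePath X q) (p : ℕ → A) (hp : p ∈ X)
    (β α β' α' : List A) (x x' : ℕ → A) (hxX : x ∈ X) (hx'X : x' ∈ X)
    (hp1 : p = wcat β x) (hp2 : p = wcat β' x')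
    (hq1 : q = wcat α x) (hq2 : q = wcat α' x')
    (hred : α = [] ∨ β = [] ∨ α.getLast? ≠ β.getLast?)
    (hred' : α' = [] ∨ β' = [] ∨ α'.getLast? ≠ β'.getLast?)
    (hlenα : α.length < α'.length) (hlenβ : β'.length < β.length) :
    False :=
  redInitPair_length_case_impossible_general X q hq p β α β' α' x x' hp1 hp2 hq1 hq2 hlenα hlenβ
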